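/- arXiv:1502.03216 — 2 statements merged into one kernel-verified Lean document; each statement's English description precedes it below -/
import Mathlib

section
/- Let an untyped deterministic calculus be convergence-admissible with respect to 𝒬. Then 𝒬-similarity respects the functions in 𝒬: for all expressions s1, s2, if s1 ≼ s2 then Q(s1) ≼ Q(s2) for every Q ∈ 𝒬. -/
/-! Untyped deterministic calculi (Schmidt-Schauß, Sabel, Machkasova):
an untyped deterministic calculus consists of expressions `E`, a deterministic
small-step reduction given as a partial function `step`, a set `Ans` of answers
(each irreducible), and a set `Q` of functions on expressions. -/

universe u

structure UDC : Type (u+1) where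
  E : Type u
  step : E → Option E
  Ans : Set E
  ans_irred : ∀ a ∈ Ans, step a = none
  Q : Set (E → E)

namespace UDC

variable (D : UDC)

/-- one-step reduction relation -/
def Red (s t : D.E) : Prop := D.step s = some t

/-- `s` converges to the answer `v` -/
def convTo (s v : D.E) : Prop := Relation.ReflTransGen D.Red s v ∧ v ∈ D.Ans

/-- `s` converges -/
def conv (s : D.E) : Prop := ∃ v, D.convTo s v

/-- the `Q`-experiment operator on binary relations on expressions -/
def F (η : D.E → D.E → Prop) (s t : D.E) : Prop :=
  ∀ v1, D.convTo s v1 → ∃ v2, D.convTo t v2 ∧ ∀ Qf ∈ D.Q, η (Qf v1) (Qf v2)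

/-- greatest fixpoint of a (monotone) operator on relations:
the union of all post-fixed points -/
def gfpRel {α : Type u} (F : (α → α → Prop) → (α → α → Prop)) (a b : α) : Prop :=
  ∃ η, (∀ x y, η x y → F η x y) ∧ η a b

/-- `Q`-similarity: the greatest fixpoint of the experiment operator -/
def sim : D.E → D.E → Prop := gfpRel D.F

/-- `Q1 (Q2 (… (Qn s)))` -/
def applyAll (l : List (D.E → D.E)) (s : D.E) : D.E := l.foldr (fun f e => f e) s

/-- the inductively defined preorder `≤_Q` -/
def leQ (s t : D.E) : Prop :=
  ∀ l : List (D.E → D.E), (∀ f ∈ l, f ∈ D.Q) →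
    D.conv (D.applyAll l s) → D.conv (D.applyAll l t)

/-- convergence admissibility w.r.t. `Q` -/
def admissible : Prop :=
  ∀ f ∈ D.Q, ∀ s v, D.convTo (f s) v ↔ ∃ v', D.convTo s v' ∧ D.convTo (f v') v

end UDC


/-- `sim` is a post-fixed point of `F`. -/
theorem sim_postfix (D : UDC) : ∀ x y, D.sim x y → D.F D.sim x y := by
  rintro x y ⟨η, hpost, hxy⟩ v1 hv1
  obtain ⟨v2, hv2, hQ⟩ := hpost x y hxy v1 hv1
  exact ⟨v2, hv2, fun Qf hQf => ⟨η, hpost, hQ Qf hQf⟩⟩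

/-- In a convergence-admissible calculus, `Q`-similarity respects
the functions in `Q`. -/
theorem sim_respects_Q (D : UDC) (hadm : D.admissible) :
    ∀ s1 s2, D.sim s1 s2 → ∀ f ∈ D.Q, D.sim (f s1) (f s2) := by
  intro s1 s2 hsim f hf
  refine ⟨fun x y => D.sim x y ∨ ∃ g ∈ D.Q, ∃ a b, D.sim a b ∧ x = g a ∧ y = g b,
    ?_, Or.inr ⟨f, hf, s1, s2, hsim, rfl, rfl⟩⟩
  rintro x y (hxy | ⟨g, hg, a, b, hab, rfl, rfl⟩)
  · intro v1 hv1
    obtain ⟨v2, hv2, hQ⟩ := sim_postfix D x y hxy v1 hv1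
    exact ⟨v2, hv2, fun Qf hQf => Or.inl (hQ Qf hQf)⟩
  · intro v1 hv1
    obtain ⟨v', hav', hgv'⟩ := (hadm g hg a v1).mp hv1
    obtain ⟨w', hbw', hQ1⟩ := sim_postfix D a b hab v' hav'
    have hsim2 : D.sim (g v') (g w') := hQ1 g hg
    obtain ⟨v2, hgw2, hQ2⟩ := sim_postfix D _ _ hsim2 v1 hgv'
    refine ⟨v2, (hadm g hg b v2).mpr ⟨w', hbw', hgw2⟩,
      fun Qf hQf => Or.inl (hQ2 Qf hQf)⟩
end

section
/- In the calculus L_lcc, normal-order reduction preserves contextual equivalence: if s →_lcc s' then s ∼_lcc s'. Hence the reduction rules (nbeta), (ncase) and (nseq) of L_lcc are correct program transformations, i.e. applying them in any context preserves ∼_lcc. -/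
/-! # Core syntax for the calculi L_lcc, L_name and LR

Following Schmidt-Schauß, Sabel, Machkasova,
"Simulation in the Call-by-Need Lambda-Calculus with Letrec, Case, Constructors, and Seq".

Expressions use de Bruijn indices.  A signature fixes the set of types, the data
constructors of each type together with their arities, and a distinguished type `Bool`
with the 0-ary constructors `True` and `False`. -/



structure Sig : Type 1 where
  TyName : Type
  CName : TyName → Type
  deceq : ∀ T, DecidableEq (CName T)
  arity : ∀ T, CName T → ℕ
  boolTy : TyName
  trueC : CName boolTy
  falseC : CName boolTy
  true_arity : arity boolTy trueC = 0
  false_arity : arity boolTy falseC = 0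
  true_ne_false : trueC ≠ falseC

variable (S : Sig)

/-- ℒ-expressions (de Bruijn): variables, applications, abstractions, fully saturated
constructor applications, `seq`, `case` (with exactly one alternative per constructor
of the scrutinized type; the alternative for `c` binds `arity c` variables), and
`letrec` with `n+1` mutually recursive bindings (so at least one binding); the
bindings and the body are under the `n+1` letrec binders.
The letrec-free expressions are the expressions of `L_lcc`. -/
inductive Exp : Type where
  | var : ℕ → Exp
  | app : Exp → Exp → Exp
  | lam : Exp → Exp
  | constr : (T : S.TyName) → (c : S.CName T) → (Fin (S.arity T c) → Exp) → Exp
  | seqE : Exp → Exp → Exp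
  | caseE : (T : S.TyName) → Exp → ((c : S.CName T) → Exp) → Exp
  | letrecE : (n : ℕ) → (Fin (n+1) → Exp) → Exp → Exp

namespace Core

variable {S}

/-- lift a renaming under `m` binders -/
def liftN (m : ℕ) (f : ℕ → ℕ) : ℕ → ℕ := fun k => if k < m then k else f (k - m) + m

/-- renaming of de Bruijn indices -/
def rename (f : ℕ → ℕ) : Exp S → Exp S
  | .var k => .var (f k)
  | .app u v => .app (rename f u) (rename f v)
  | .lam u => .lam (rename (liftN 1 f) u)
  | .constr T c args => .constr T c (fun i => rename f (args i))
  | .seqE u v => .seqE (rename f u) (rename f v)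
  | .caseE T e alts => .caseE T (rename f e) (fun c => rename (liftN (S.arity T c) f) (alts c))
  | .letrecE n b t => .letrecE n (fun i => rename (liftN (n+1) f) (b i)) (rename (liftN (n+1) f) t)

/-- lift a substitution under `m` binders -/
def upN (m : ℕ) (σ : ℕ → Exp S) : ℕ → Exp S :=
  fun k => if k < m then .var k else rename (· + m) (σ (k - m))

/-- parallel substitution -/
def subst (σ : ℕ → Exp S) : Exp S → Exp S
  | .var k => σ k
  | .app u v => .app (subst σ u) (subst σ v)
  | .lam u => .lam (subst (upN 1 σ) u)
  | .constr T c args => .constr T c (fun i => subst σ (args i))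
  | .seqE u v => .seqE (subst σ u) (subst σ v)
  | .caseE T e alts => .caseE T (subst σ e) (fun c => subst (upN (S.arity T c) σ) (alts c))
  | .letrecE n b t => .letrecE n (fun i => subst (upN (n+1) σ) (b i)) (subst (upN (n+1) σ) t)

/-- the substitution `[t/x0]` for the outermost binder -/
def consSub (t : Exp S) : ℕ → Exp S
  | 0 => t
  | (k+1) => .var k

/-- the substitution replacing the `m` innermost binders by `args` -/
def instSub {m : ℕ} (args : Fin m → Exp S) : ℕ → Exp S :=
  fun k => if h : k < m then args ⟨k, h⟩ else .var (k - m)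

/-- `closedUnder d e`: all free de Bruijn indices of `e` are `< d` -/
def closedUnder : ℕ → Exp S → Prop
  | d, .var k => k < d
  | d, .app u v => closedUnder d u ∧ closedUnder d v
  | d, .lam u => closedUnder (d+1) u
  | d, .constr _ _ args => ∀ i, closedUnder d (args i)
  | d, .seqE u v => closedUnder d u ∧ closedUnder d v
  | d, .caseE T e alts => closedUnder d e ∧ ∀ c, closedUnder (d + S.arity T c) (alts c)
  | d, .letrecE n b t => (∀ i, closedUnder (d + (n+1)) (b i)) ∧ closedUnder (d + (n+1)) t

/-- a closed expression -/
def closed (e : Exp S) : Prop := closedUnder 0 e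

/-- letrec-free expressions, i.e. the expressions of the calculus `L_lcc` -/
def lfree : Exp S → Prop
  | .var _ => True
  | .app u v => lfree u ∧ lfree v
  | .lam u => lfree u
  | .constr _ _ args => ∀ i, lfree (args i)
  | .seqE u v => lfree u ∧ lfree v
  | .caseE _ e alts => lfree e ∧ ∀ c, lfree (alts c)
  | .letrecE _ _ _ => False

/-- values: abstractions and constructor applications -/
def isValue : Exp S → Prop
  | .lam _ => True
  | .constr _ _ _ => True
  | _ => False

/-- constructor applications -/
def isConstrApp (e : Exp S) : Prop := ∃ T c args, e = .constr T c args

/-- the diverging expression `Ω = (λz. z z) (λx. x x)` -/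
def Omega : Exp S :=
  .app (.lam (.app (.var 0) (.var 0))) (.lam (.app (.var 0) (.var 0)))

/-- the constructor `True` (of the distinguished type `Bool`, arity 0) -/
def trueE : Exp S := .constr S.boolTy S.trueC (fun _ => .var 0)

/-- update the alternative for constructor `c0` -/
def updAlt {T : S.TyName} (alts : (c : S.CName T) → Exp S) (c0 : S.CName T) (e : Exp S) :
    (c : S.CName T) → Exp S :=
  fun c => letI := S.deceq T; if c = c0 then e else alts c

end Core
namespace Core

variable {S : Sig}

/-! ## Contexts -/

/-- reduction contexts of `L_lcc` (and `A`-contexts of `L_name`):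
`A ::= [·] | (A s) | (case_T A of alts) | (seq A s)` -/
inductive ACtx (S : Sig) : Type where
  | hole : ACtx S
  | appA : ACtx S → Exp S → ACtx S
  | seqA : ACtx S → Exp S → ACtx S
  | caseA : (T : S.TyName) → ACtx S → ((c : S.CName T) → Exp S) → ACtx S

/-- plugging an expression into an `A`-context -/
def plugA : ACtx S → Exp S → Exp S
  | .hole, e => e
  | .appA A t, e => .app (plugA A e) t
  | .seqA A t, e => .seqE (plugA A e) t
  | .caseA T A alts, e => .caseE T (plugA A e) alts

/-- renaming an `A`-context (there are no binders above the hole) -/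
def renameA (f : ℕ → ℕ) : ACtx S → ACtx S
  | .hole => .hole
  | .appA A t => .appA (renameA f A) (rename f t)
  | .seqA A t => .seqA (renameA f A) (rename f t)
  | .caseA T A alts => .caseA T (renameA f A) (fun c => rename (liftN (S.arity T c) f) (alts c))

/-- general (one-hole, possibly capturing) contexts over ℒ-expressions -/
inductive Ctx (S : Sig) : Type where
  | hole : Ctx S
  | appL : Ctx S → Exp S → Ctx S
  | appR : Exp S → Ctx S → Ctx S
  | lamC : Ctx S → Ctx S
  | seqL : Ctx S → Exp S → Ctx S
  | seqR : Exp S → Ctx S → Ctx S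
  | constrC : (T : S.TyName) → (c : S.CName T) → Fin (S.arity T c) →
      (Fin (S.arity T c) → Exp S) → Ctx S → Ctx S
  | caseScrut : (T : S.TyName) → Ctx S → ((c : S.CName T) → Exp S) → Ctx S
  | caseAlt : (T : S.TyName) → (c0 : S.CName T) → Exp S → ((c : S.CName T) → Exp S) →
      Ctx S → Ctx S
  | letrecB : (n : ℕ) → Fin (n+1) → (Fin (n+1) → Exp S) → Ctx S → Exp S → Ctx S
  | letrecT : (n : ℕ) → (Fin (n+1) → Exp S) → Ctx S → Ctx S

/-- plugging (capture-permitting) into a general context -/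
def plugC : Ctx S → Exp S → Exp S
  | .hole, e => e
  | .appL C t, e => .app (plugC C e) t
  | .appR t C, e => .app t (plugC C e)
  | .lamC C, e => .lam (plugC C e)
  | .seqL C t, e => .seqE (plugC C e) t
  | .seqR t C, e => .seqE t (plugC C e)
  | .constrC T c i args C, e => .constr T c (Function.update args i (plugC C e))
  | .caseScrut T C alts, e => .caseE T (plugC C e) alts
  | .caseAlt T c0 scrut alts C, e => .caseE T scrut (updAlt alts c0 (plugC C e))
  | .letrecB n i b C t, e => .letrecE n (Function.update b i (plugC C e)) t
  | .letrecT n b C, e => .letrecE n b (plugC C e)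

/-- number of binders above the hole of a context -/
def depthC : Ctx S → ℕ
  | .hole => 0
  | .appL C _ => depthC C
  | .appR _ C => depthC C
  | .lamC C => depthC C + 1
  | .seqL C _ => depthC C
  | .seqR _ C => depthC C
  | .constrC _ _ _ _ C => depthC C
  | .caseScrut _ C _ => depthC C
  | .caseAlt T c0 _ _ C => depthC C + S.arity T c0
  | .letrecB n _ _ C _ => depthC C + (n+1)
  | .letrecT n _ C => depthC C + (n+1)

/-- letrec-free contexts, i.e. the contexts of `L_lcc` -/
def lfreeCtx : Ctx S → Prop
  | .hole => True
  | .appL C t => lfreeCtx C ∧ lfree t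
  | .appR t C => lfree t ∧ lfreeCtx C
  | .lamC C => lfreeCtx C
  | .seqL C t => lfreeCtx C ∧ lfree t
  | .seqR t C => lfree t ∧ lfreeCtx C
  | .constrC _ _ _ args C => (∀ i, lfree (args i)) ∧ lfreeCtx C
  | .caseScrut _ C alts => lfreeCtx C ∧ ∀ c, lfree (alts c)
  | .caseAlt _ _ scrut alts C => lfree scrut ∧ (∀ c, lfree (alts c)) ∧ lfreeCtx C
  | .letrecB _ _ _ _ _ => False
  | .letrecT _ _ _ => False

/-! ## The calculus `L_lcc` -/

/-- the basic reduction rules (nbeta), (nseq), (ncase) of `L_lcc` -/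
inductive LccBase : Exp S → Exp S → Prop where
  | nbeta {u t} : LccBase (.app (.lam u) t) (subst (consSub t) u)
  | nseq {v t} : isValue v → LccBase (.seqE v t) t
  | ncase {T c args alts} :
      LccBase (.caseE T (.constr T c args) alts) (subst (instSub args) (alts c))

/-- normal-order reduction of `L_lcc`: a basic rule inside a reduction context -/
def lccStep (s t : Exp S) : Prop :=
  ∃ (A : ACtx S) (r r' : Exp S), LccBase r r' ∧ s = plugA A r ∧ t = plugA A r'

/-- `s` reduces in finitely many normal-order steps to the value `v` -/
def lccConvTo (s v : Exp S) : Prop := Relation.ReflTransGen lccStep s v ∧ isValue v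

/-- convergence in `L_lcc` -/
def lccConv (s : Exp S) : Prop := ∃ v, lccConvTo s v

/-- contextual preorder of `L_lcc` (quantifying over the letrec-free contexts) -/
def leLcc (s t : Exp S) : Prop :=
  ∀ C : Ctx S, lfreeCtx C → lccConv (plugC C s) → lccConv (plugC C t)

/-- contextual equivalence of `L_lcc` -/
def eqLcc (s t : Exp S) : Prop := leLcc s t ∧ leLcc t s

/-- open extension of a relation, w.r.t. closing `L_lcc`-substitutions -/
def openL (η : Exp S → Exp S → Prop) (s t : Exp S) : Prop :=
  ∀ σ : ℕ → Exp S, (∀ k, lfree (σ k)) →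
    closed (subst σ s) → closed (subst σ t) → η (subst σ s) (subst σ t)

/-- `cBot`: expressions all of whose closing `L_lcc`-instances diverge -/
def cBot (s : Exp S) : Prop :=
  ∀ σ : ℕ → Exp S, (∀ k, lfree (σ k)) → closed (subst σ s) → ¬ lccConv (subst σ s)

/-- greatest fixpoint of a (monotone) operator on relations:
the union of all post-fixed points -/
def gfpRel {α : Type*} (F : (α → α → Prop) → (α → α → Prop)) (a b : α) : Prop :=
  ∃ η, (∀ x y, η x y → F η x y) ∧ η a b

/-- the operator `F_lcc` for applicative similarity in `L_lcc` -/
def Flcc (η : Exp S → Exp S → Prop) (s t : Exp S) : Prop :=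
  (∀ s', lccConvTo s (.lam s') →
      ((∃ t', lccConvTo t (.lam t') ∧ openL η s' t') ∨
       (∃ T c targs, lccConvTo t (.constr T c targs) ∧ cBot s'))) ∧
  (∀ T c args, lccConvTo s (.constr T c args) →
      ∃ targs, lccConvTo t (.constr T c targs) ∧ ∀ i, η (args i) (targs i))

/-- applicative similarity `≼_lcc` in `L_lcc` -/
def simLcc : Exp S → Exp S → Prop := gfpRel Flcc

end Core
namespace Core

variable {S : Sig}

/-! ## The test contexts `Q_lcc` and `Q_CE` -/

/-- the context `case_T [·] of … ((c x1 … x_ar) → x_i) …`, all other alternatives `Ω` -/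
def caseSelCtx (T : S.TyName) (c : S.CName T) (i : Fin (S.arity T c)) : Exp S → Exp S :=
  fun e => .caseE T e (fun c' => letI := S.deceq T; if c' = c then .var i else Omega)

/-- the context `case_T [·] of … ((c x1 … x_ar) → True) …`, all other alternatives `Ω` -/
def caseTrueCtx (T : S.TyName) (c : S.CName T) : Exp S → Exp S :=
  fun e => .caseE T e (fun c' => letI := S.deceq T; if c' = c then trueE else Omega)

/-- the set `Q_lcc`: application to a closed `L_lcc`-expression, the selector case
contexts, and the `True` case contexts -/
def Qlcc (S : Sig) : Set (Exp S → Exp S) :=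
  {f | (∃ r : Exp S, lfree r ∧ closed r ∧ f = fun e => .app e r) ∨
       (∃ T c i, f = caseSelCtx T c i) ∨
       (∃ T c, f = caseTrueCtx T c)}

/-- the set `CE_lcc` of closed letrec-free expressions generated by
`r ::= Ω | λx.s | (c r1 … r_ar)` -/
inductive CE : Exp S → Prop where
  | omega : CE Omega
  | abs {u : Exp S} : lfree (Exp.lam u) → closed (Exp.lam u) → CE (.lam u)
  | constrI {T c} {args : Fin (S.arity T c) → Exp S} :
      (∀ i, CE (args i)) → CE (.constr T c args)

/-- the set `Q_CE`: like `Q_lcc`, but the arguments in application contexts are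
restricted to `CE_lcc` -/
def QCE (S : Sig) : Set (Exp S → Exp S) :=
  {f | (∃ r : Exp S, CE r ∧ f = fun e => .app e r) ∨
       (∃ T c i, f = caseSelCtx T c i) ∨
       (∃ T c, f = caseTrueCtx T c)}

/-- `Q1 (Q2 (… (Qn s)))` -/
def applyAll (l : List (Exp S → Exp S)) (s : Exp S) : Exp S := l.foldr (fun f e => f e) s

/-! ### `Q`-similarity and the inductive `Q`-preorder in `L_lcc` -/

/-- the `Q`-experiment operator for `L_lcc`, instantiated with a set `𝒬` of contexts -/
def FQlcc (𝒬 : Set (Exp S → Exp S)) (η : Exp S → Exp S → Prop) (s t : Exp S) : Prop :=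
  ∀ v1, lccConvTo s v1 → ∃ v2, lccConvTo t v2 ∧ ∀ f ∈ 𝒬, η (f v1) (f v2)

/-- `𝒬`-similarity in `L_lcc` -/
def simQlcc (𝒬 : Set (Exp S → Exp S)) : Exp S → Exp S → Prop := gfpRel (FQlcc 𝒬)

/-- the inductively defined preorder `≤_{lcc,𝒬}` -/
def leQlcc (𝒬 : Set (Exp S → Exp S)) (s t : Exp S) : Prop :=
  ∀ l : List (Exp S → Exp S), (∀ f ∈ l, f ∈ 𝒬) →
    lccConv (applyAll l s) → lccConv (applyAll l t)

end Core
namespace Core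

variable {S : Sig}

/-! ## The call-by-need calculus `LR` -/

/-- variable-to-variable binding chains in a letrec environment -/
inductive derefChain {n : ℕ} (b : Fin (n+1) → Exp S) : Fin (n+1) → Fin (n+1) → Prop where
  | refl (i) : derefChain b i i
  | step {i j k : Fin (n+1)} : b i = .var (j : ℕ) → derefChain b j k → derefChain b i k

/-- `Needed b body i`: binding `i` is visited by the labeling algorithm (its value is
needed), starting from the body of the top-level letrec -/
inductive Needed {n : ℕ} (b : Fin (n+1) → Exp S) (body : Exp S) : Fin (n+1) → Prop where
  | ofBody {A : ACtx S} {i : Fin (n+1)} : body = plugA A (.var (i : ℕ)) → Needed b body i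
  | ofBind {k} {A : ACtx S} {i : Fin (n+1)} :
      Needed b body k → b k = plugA A (.var (i : ℕ)) → Needed b body i

/-- renaming used when merging letrec environments: the outer part
(`N` outer bindings, `M` inner bindings) -/
def rhoOut (N M : ℕ) : ℕ → ℕ := fun k => if k < N then k else k + M

/-- renaming used when merging letrec environments: the inner part -/
def rhoIn (N M : ℕ) : ℕ → ℕ :=
  fun k => if k < M then k + N else if k < M + N then k - M else k

/-- merged environment of `(llet-in)`: outer bindings first, then inner bindings -/
def mergeEnv {n m : ℕ} (b : Fin (n+1) → Exp S) (b2 : Fin (m+1) → Exp S) :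
    Fin (n+m+1+1) → Exp S :=
  fun j => if h : (j : ℕ) < n+1
    then rename (rhoOut (n+1) (m+1)) (b ⟨j, h⟩)
    else rename (rhoIn (n+1) (m+1)) (b2 ⟨(j : ℕ) - (n+1), by omega⟩)

/-- merged environment of `(llet-e)`: the environment of the letrec bound at `i`
is flattened into the outer environment, the binding `i` becomes the inner body -/
def mergeEnvAt {n m : ℕ} (b : Fin (n+1) → Exp S) (i : Fin (n+1))
    (b2 : Fin (m+1) → Exp S) (t2 : Exp S) : Fin (n+m+1+1) → Exp S :=
  fun j => if h : (j : ℕ) < n+1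
    then (if (⟨j, h⟩ : Fin (n+1)) = i
          then rename (rhoIn (n+1) (m+1)) t2
          else rename (rhoOut (n+1) (m+1)) (b ⟨j, h⟩))
    else rename (rhoIn (n+1) (m+1)) (b2 ⟨(j : ℕ) - (n+1), by omega⟩)

/-- the environment produced by `(case-in)`/`(case-e)` with `arity c = m+1`:
all old bindings are shifted, binding `j` becomes `c y1 … y_{m+1}` for the fresh
bindings `y_q = s_q` appended at the end -/
def caseShareEnv {n m : ℕ} (b : Fin (n+1) → Exp S) (j : Fin (n+1))
    {T : S.TyName} (c : S.CName T) (h : S.arity T c = m+1)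
    (args : Fin (S.arity T c) → Exp S) : Fin (n+m+1+1) → Exp S :=
  fun p => if hp : (p : ℕ) < n+1
    then (if (⟨p, hp⟩ : Fin (n+1)) = j
          then .constr T c (fun q => .var (n+1+(q : ℕ)))
          else rename (rhoOut (n+1) (m+1)) (b ⟨p, hp⟩))
    else rename (rhoOut (n+1) (m+1)) (args (Fin.cast h.symm ⟨(p : ℕ) - (n+1), by omega⟩))

/-- the replacement for a `(case-in)`/`(case-e)` redex: `letrec z1 = y1, …, z_{m+1} = y_{m+1}
in alt`, where the `y_q` are the fresh environment bindings (indices `n+1+q` at top level) -/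
def caseShareBody {n m : ℕ} {T : S.TyName} (c : S.CName T) (_h : S.arity T c = m+1)
    (alts : (c : S.CName T) → Exp S) : Exp S :=
  .letrecE m (fun q => .var (n+1+(m+1)+(q : ℕ)))
    (rename (liftN (m+1) (rhoOut (n+1) (m+1))) (alts c))

/-- the basic `LR`-rules not involving the top-level environment:
(lbeta), (seq-c), (case-c), (lapp), (lseq), (lcase) -/
inductive LRbase : Exp S → Exp S → Prop where
  | lbeta {u t} :
      LRbase (.app (.lam u) t) (.letrecE 0 (fun _ => rename (· + 1) t) u)
  | seqc {v t} : isValue v → LRbase (.seqE v t) t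
  | casec0 {T c args alts} (h : S.arity T c = 0) :
      LRbase (.caseE T (.constr T c args) alts) (alts c)
  | casec1 {T c args alts m} (h : S.arity T c = m+1) :
      LRbase (.caseE T (.constr T c args) alts)
        (.letrecE m (fun i => rename (· + (m+1)) (args (Fin.cast h.symm i))) (alts c))
  | lapp {n b e t} :
      LRbase (.app (.letrecE n b e) t) (.letrecE n b (.app e (rename (· + (n+1)) t)))
  | lseq {n b e t} :
      LRbase (.seqE (.letrecE n b e) t) (.letrecE n b (.seqE e (rename (· + (n+1)) t)))
  | lcase {n b e T alts} :
      LRbase (.caseE T (.letrecE n b e) alts)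
        (.letrecE n b (.caseE T e (fun c => rename (liftN (S.arity T c) (· + (n+1))) (alts c))))

/-- normal-order reduction `→_LR` of the call-by-need calculus `LR`:
the rules of Fig. 1, applied at the position determined by the labeling algorithm
(in the body or in a needed binding of the top-level letrec, or — for expressions
without a top-level letrec — along the application/seq/case spine). -/
inductive LRstep : Exp S → Exp S → Prop where
  /- basic rule at the top (no top-level letrec environment involved): -/
  | topA {A : ACtx S} {r r'} : LRbase r r' → LRstep (plugA A r) (plugA A r')
  /- basic rule in the body of the top-level letrec: -/
  | bodyA {n} {b : Fin (n+1) → Exp S} {A : ACtx S} {r r'} :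
      LRbase r r' → LRstep (.letrecE n b (plugA A r)) (.letrecE n b (plugA A r'))
  /- basic rule inside a needed binding: -/
  | bindA {n} {b : Fin (n+1) → Exp S} {body} {i : Fin (n+1)} {A : ACtx S} {r r'} :
      Needed b body i → b i = plugA A r → LRbase r r' →
      LRstep (.letrecE n b body) (.letrecE n (Function.update b i (plugA A r')) body)
  /- (llet-in): -/
  | lletIn {n b m b2 t2} :
      LRstep (.letrecE n b (.letrecE m b2 t2))
        (.letrecE (n+m+1) (mergeEnv b b2) (rename (rhoIn (n+1) (m+1)) t2))
  /- (llet-e): -/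
  | lletE {n b body} {i : Fin (n+1)} {m b2 t2} :
      Needed b body i → b i = .letrecE m b2 t2 →
      LRstep (.letrecE n b body)
        (.letrecE (n+m+1) (mergeEnvAt b i b2 t2) (rename (rhoOut (n+1) (m+1)) body))
  /- (cp-in): -/
  | cpIn {n} {b : Fin (n+1) → Exp S} {A : ACtx S} {i j : Fin (n+1)} {u} :
      derefChain b i j → b j = .lam u →
      LRstep (.letrecE n b (plugA A (.var (i : ℕ)))) (.letrecE n b (plugA A (.lam u)))
  /- (cp-e): -/
  | cpE {n} {b : Fin (n+1) → Exp S} {body} {k : Fin (n+1)} {A : ACtx S} {i j : Fin (n+1)} {u} :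
      Needed b body k → b k = plugA A (.var (i : ℕ)) → derefChain b i j → b j = .lam u →
      LRstep (.letrecE n b body) (.letrecE n (Function.update b k (plugA A (.lam u))) body)
  /- (seq-in): -/
  | seqIn {n} {b : Fin (n+1) → Exp S} {A : ACtx S} {i j : Fin (n+1)} {t} :
      derefChain b i j → isConstrApp (b j) →
      LRstep (.letrecE n b (plugA A (.seqE (.var (i : ℕ)) t)))
        (.letrecE n b (plugA A t))
  /- (seq-e): -/
  | seqEe {n} {b : Fin (n+1) → Exp S} {body} {k : Fin (n+1)} {A : ACtx S} {i j : Fin (n+1)} {t} :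
      Needed b body k → b k = plugA A (.seqE (.var (i : ℕ)) t) →
      derefChain b i j → isConstrApp (b j) →
      LRstep (.letrecE n b body) (.letrecE n (Function.update b k (plugA A t)) body)
  /- (case-in), scrutinized constructor of arity 0: -/
  | caseIn0 {n} {b : Fin (n+1) → Exp S} {A : ACtx S} {i j : Fin (n+1)} {T c args alts} :
      derefChain b i j → b j = .constr T c args → S.arity T c = 0 →
      LRstep (.letrecE n b (plugA A (.caseE T (.var (i : ℕ)) alts)))
        (.letrecE n b (plugA A (alts c)))
  /- (case-e), scrutinized constructor of arity 0: -/
  | caseE0 {n} {b : Fin (n+1) → Exp S} {body} {k : Fin (n+1)} {A : ACtx S} {i j : Fin (n+1)}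
      {T c args alts} :
      Needed b body k → b k = plugA A (.caseE T (.var (i : ℕ)) alts) →
      derefChain b i j → b j = .constr T c args → S.arity T c = 0 →
      LRstep (.letrecE n b body) (.letrecE n (Function.update b k (plugA A (alts c))) body)
  /- (case-in), arity ≥ 1: the constructor arguments are shared in fresh bindings -/
  | caseIn1 {n} {b : Fin (n+1) → Exp S} {A : ACtx S} {i j : Fin (n+1)} {T c args alts m}
      (h : S.arity T c = m+1) :
      derefChain b i j → b j = .constr T c args →
      LRstep (.letrecE n b (plugA A (.caseE T (.var (i : ℕ)) alts)))
        (.letrecE (n+m+1) (caseShareEnv b j c h args)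
          (plugA (renameA (rhoOut (n+1) (m+1)) A) (caseShareBody (n := n) c h alts)))
  /- (case-e), arity ≥ 1: -/
  | caseE1 {n} {b : Fin (n+1) → Exp S} {body} {k : Fin (n+1)} {A : ACtx S} {i j : Fin (n+1)}
      {T c args alts m} (h : S.arity T c = m+1) :
      Needed b body k → b k = plugA A (.caseE T (.var (i : ℕ)) alts) →
      derefChain b i j → b j = .constr T c args →
      LRstep (.letrecE n b body)
        (.letrecE (n+m+1)
          (Function.update (caseShareEnv b j c h args)
            (Fin.castLE (by omega) k)
            (plugA (renameA (rhoOut (n+1) (m+1)) A) (caseShareBody (n := n) c h alts)))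
          (rename (rhoOut (n+1) (m+1)) body))

/-- weak head normal forms of `LR`: values, `letrec Env in v` for a value `v`, and
`letrec x1 = (c s⃗), x2 = x1, …, xm = x_{m-1}, Env in xm` -/
def isLRwhnf (s : Exp S) : Prop :=
  isValue s ∨
  ∃ (n : ℕ) (b : Fin (n+1) → Exp S) (body : Exp S), s = .letrecE n b body ∧
    (isValue body ∨ ∃ i j : Fin (n+1), body = .var (i : ℕ) ∧ derefChain b i j ∧ isConstrApp (b j))

/-- `s` reduces in finitely many `→_LR`-steps to an `LR`-WHNF `v` -/
def lrConvTo (s v : Exp S) : Prop := Relation.ReflTransGen LRstep s v ∧ isLRwhnf v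

/-- convergence in `LR` -/
def lrConv (s : Exp S) : Prop := ∃ v, lrConvTo s v

/-- contextual preorder of `LR` -/
def leLR (s t : Exp S) : Prop := ∀ C : Ctx S, lrConv (plugC C s) → lrConv (plugC C t)

/-- contextual equivalence of `LR` -/
def eqLR (s t : Exp S) : Prop := leLR s t ∧ leLR t s

end Core
namespace Core

variable {S : Sig}

/-! ## The call-by-name calculus `L_name` -/

/-- a letrec frame (one `letrec` environment) -/
def Frame (S : Sig) : Type := Σ n : ℕ, Fin (n+1) → Exp S

/-- plugging under a stack of letrec frames (`L`-contexts), outermost frame first -/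
def plugFrames : List (Frame S) → Exp S → Exp S
  | [], e => e
  | ⟨n, b⟩ :: fs, e => .letrecE n b (plugFrames fs e)

/-- looking up a de Bruijn index in a stack of letrec frames given innermost-first;
the result is weakened to the innermost level -/
def lookRev : List (Frame S) → ℕ → Option (Exp S)
  | [], _ => none
  | ⟨n, b⟩ :: rest, k =>
      if h : k < n+1 then some (b ⟨k, h⟩)
      else (lookRev rest (k - (n+1))).map (rename (· + (n+1)))

/-- the basic rules of `L_name`: (beta), (seq), (case) — with substitution —
and (lapp), (lseq), (lcase) -/
inductive NBase : Exp S → Exp S → Prop where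
  | beta {u t} : NBase (.app (.lam u) t) (subst (consSub t) u)
  | seqv {v t} : isValue v → NBase (.seqE v t) t
  | casec {T c args alts} :
      NBase (.caseE T (.constr T c args) alts) (subst (instSub args) (alts c))
  | lapp {n b e t} :
      NBase (.app (.letrecE n b e) t) (.letrecE n b (.app e (rename (· + (n+1)) t)))
  | lseq {n b e t} :
      NBase (.seqE (.letrecE n b e) t) (.letrecE n b (.seqE e (rename (· + (n+1)) t)))
  | lcase {n b e T alts} :
      NBase (.caseE T (.letrecE n b e) alts)
        (.letrecE n b (.caseE T e (fun c => rename (liftN (S.arity T c) (· + (n+1))) (alts c))))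

/-- normal-order reduction `→_name` of `L_name`: a basic rule, or the copy rule (gcp),
inside a reduction context `L[A]` -/
inductive NStep : Exp S → Exp S → Prop where
  | base {fs : List (Frame S)} {A : ACtx S} {r r'} :
      NBase r r' → NStep (plugFrames fs (plugA A r)) (plugFrames fs (plugA A r'))
  | gcp {fs : List (Frame S)} {A : ACtx S} {k : ℕ} {e : Exp S} :
      lookRev fs.reverse k = some e →
      NStep (plugFrames fs (plugA A (.var k))) (plugFrames fs (plugA A e))

/-- weak head normal forms of `L_name`: `L[v]` for a value `v` -/
def isNameWhnf (s : Exp S) : Prop :=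
  ∃ (fs : List (Frame S)) (v : Exp S), s = plugFrames fs v ∧ isValue v

/-- `s` reduces in finitely many `→_name`-steps to an `L_name`-WHNF `v` -/
def nameConvTo (s v : Exp S) : Prop := Relation.ReflTransGen NStep s v ∧ isNameWhnf v

/-- convergence in `L_name` -/
def nameConv (s : Exp S) : Prop := ∃ v, nameConvTo s v

/-- contextual preorder of `L_name` -/
def leName (s t : Exp S) : Prop := ∀ C : Ctx S, nameConv (plugC C s) → nameConv (plugC C t)

/-- contextual equivalence of `L_name` -/
def eqName (s t : Exp S) : Prop := leName s t ∧ leName t s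

/-! ## The translation `N : L_name → L_lcc` via multi-fixpoint combinators -/

/-- iterated application `f a1 … an` -/
def apps (f : Exp S) (l : List (Exp S)) : Exp S := l.foldl .app f

/-- iterated abstraction `λ^k. e` -/
def lamN : ℕ → Exp S → Exp S
  | 0, e => e
  | (k+1), e => .lam (lamN k e)

/-- shift all indices `≥ c` by `k` -/
def shiftCut (c k : ℕ) : Exp S → Exp S := rename (fun x => if x < c then x else x + k)

/-- the argument list `[g (N-1), …, g 0]`, so that after `N` beta steps the
binder with de Bruijn index `i` receives `g i` -/
def argsOf {N : ℕ} (g : Fin N → Exp S) : List (Exp S) := (List.ofFn g).reverse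

/-- `U_i = (x_i' x_1' … x_n')` (under the outer binders) -/
def Uarg (N : ℕ) (i : Fin N) : Exp S :=
  apps (.var (i : ℕ)) (argsOf (fun j : Fin N => .var (j : ℕ)))

/-- `X_i' = λ x1 … xn. F_i (x1 x1 … xn) … (xn x1 … xn)` with `F_i = λ x1 … xn. gi` -/
def Xarg (N : ℕ) (gi : Exp S) : Exp S :=
  lamN N (apps (lamN N (shiftCut N N gi))
    (argsOf (fun j : Fin N => apps (.var (j : ℕ)) (argsOf (fun l : Fin N => .var (l : ℕ))))))

/-- the translation of one letrec: `(λ x1' … xn'. (λ x1 … xn. t') U1 … Un) X1' … Xn'` -/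
def letrecTrans (N : ℕ) (g : Fin N → Exp S) (t' : Exp S) : Exp S :=
  apps (lamN N (apps (lamN N (shiftCut N N t')) (argsOf (Uarg N))))
    (argsOf (fun i => Xarg N (g i)))

/-- the translation `N : L_name → L_lcc`, eliminating letrec by multi-fixpoint
combinators; it is homomorphic on all other constructs.
(The translation `W : LR → L_name` is the identity.) -/
def Ntr : Exp S → Exp S
  | .var k => .var k
  | .app u v => .app (Ntr u) (Ntr v)
  | .lam u => .lam (Ntr u)
  | .constr T c args => .constr T c (fun i => Ntr (args i))
  | .seqE u v => .seqE (Ntr u) (Ntr v)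
  | .caseE T e alts => .caseE T (Ntr e) (fun c => Ntr (alts c))
  | .letrecE n b t => letrecTrans (n+1) (fun i => Ntr (b i)) (Ntr t)

end Core
namespace Core

variable {S : Sig}

/-! ## `Q`-similarity in `LR` -/

/-- open extension of a relation w.r.t. closing ℒ-substitutions -/
def openAll (η : Exp S → Exp S → Prop) (s t : Exp S) : Prop :=
  ∀ σ : ℕ → Exp S, closed (subst σ s) → closed (subst σ t) → η (subst σ s) (subst σ t)

/-- the `Q`-experiment operator for `LR`, instantiated with a set `𝒬` of contexts -/
def FQLR (𝒬 : Set (Exp S → Exp S)) (η : Exp S → Exp S → Prop) (s t : Exp S) : Prop :=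
  ∀ v1, lrConvTo s v1 → ∃ v2, lrConvTo t v2 ∧ ∀ f ∈ 𝒬, η (f v1) (f v2)

/-- `𝒬`-similarity in `LR` -/
def simQLR (𝒬 : Set (Exp S → Exp S)) : Exp S → Exp S → Prop := gfpRel (FQLR 𝒬)

/-- the inductively defined preorder `≤_{LR,𝒬}` -/
def leQLR (𝒬 : Set (Exp S → Exp S)) (s t : Exp S) : Prop :=
  ∀ l : List (Exp S → Exp S), (∀ f ∈ l, f ∈ 𝒬) →
    lrConv (applyAll l s) → lrConv (applyAll l t)

end Core

/-!
Every normal-order step `s →_lcc s'` is a parallel step `s ⇒ s'` (`Par`), and `⇒` is compatible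
with arbitrary contexts, so it suffices that `s ⇒ t` implies `s ↓ ↔ t ↓`.

Forward, a normal-order step from `s` is matched by at most one normal-order step from `t`,
staying related by `⇒`. Backward is Takahashi's standardization: every parallel step factors as
normal-order steps followed by an internal parallel step (`IPar`, contracting no redex on the
evaluation spine), and an internal step followed by a normal-order step can be reordered into a
normal-order step followed by a parallel step. Iterating these two facts lifts a converging
normal-order reduction of `t` to one of `s`.
-/

namespace Core

variable {S : Sig}

local infix:50 " ⟶* " => Relation.ReflTransGen lccStep

section Substitution

theorem liftN_comp (m : ℕ) (f g : ℕ → ℕ) :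
    (fun k => liftN m f (liftN m g k)) = liftN m (fun k => f (g k)) := by
  funext k
  by_cases h : k < m
  · simp [liftN, h]
  · have h2 : ¬ (g (k - m) + m < m) := by omega
    simp [liftN, h, h2]

theorem rename_rename (f g : ℕ → ℕ) (e : Exp S) :
    rename f (rename g e) = rename (fun k => f (g k)) e := by
  induction e generalizing f g with
  | var k => rfl
  | app u v ihu ihv => simp only [rename]; rw [ihu, ihv]
  | lam u ih => simp only [rename]; rw [ih, liftN_comp]
  | constr T c args ih => simp only [rename]; congr 1; funext i; rw [ih]
  | seqE u v ihu ihv => simp only [rename]; rw [ihu, ihv]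
  | caseE T e alts ihe ihalts =>
      simp only [rename]; rw [ihe]; congr 1; funext c; rw [ihalts, liftN_comp]
  | letrecE n b t ihb iht =>
      simp only [rename]; rw [iht, liftN_comp]; congr 1; funext i; rw [ihb, liftN_comp]

theorem upN_liftN (m : ℕ) (σ : ℕ → Exp S) (f : ℕ → ℕ) :
    (fun k => upN m σ (liftN m f k)) = upN m (fun k => σ (f k)) := by
  funext k
  by_cases h : k < m
  · simp [upN, liftN, h]
  · have h2 : ¬ (f (k - m) + m < m) := by omega
    simp [upN, liftN, h, h2]

theorem subst_rename (σ : ℕ → Exp S) (f : ℕ → ℕ) (e : Exp S) :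
    subst σ (rename f e) = subst (fun k => σ (f k)) e := by
  induction e generalizing σ f with
  | var k => rfl
  | app u v ihu ihv => simp only [rename, subst]; rw [ihu, ihv]
  | lam u ih => simp only [rename, subst]; rw [ih, upN_liftN]
  | constr T c args ih => simp only [rename, subst]; congr 1; funext i; rw [ih]
  | seqE u v ihu ihv => simp only [rename, subst]; rw [ihu, ihv]
  | caseE T e alts ihe ihalts =>
      simp only [rename, subst]; rw [ihe]; congr 1; funext c; rw [ihalts, upN_liftN]
  | letrecE n b t ihb iht =>
      simp only [rename, subst]; rw [iht, upN_liftN]; congr 1; funext i; rw [ihb, upN_liftN]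

theorem rename_liftN_upN (m : ℕ) (f : ℕ → ℕ) (σ : ℕ → Exp S) :
    (fun k => rename (liftN m f) (upN m σ k)) = upN m (fun k => rename f (σ k)) := by
  funext k
  by_cases h : k < m
  · simp [upN, rename, liftN, h]
  · simp only [upN, h, ite_false]
    rw [rename_rename, rename_rename]
    congr 1
    funext j
    have h2 : ¬ (j + m < m) := by omega
    simp [liftN, h2]

theorem rename_subst (f : ℕ → ℕ) (σ : ℕ → Exp S) (e : Exp S) :
    rename f (subst σ e) = subst (fun k => rename f (σ k)) e := by
  induction e generalizing σ f with
  | var k => rfl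
  | app u v ihu ihv => simp only [rename, subst]; rw [ihu, ihv]
  | lam u ih => simp only [rename, subst]; rw [ih, rename_liftN_upN]
  | constr T c args ih => simp only [rename, subst]; congr 1; funext i; rw [ih]
  | seqE u v ihu ihv => simp only [rename, subst]; rw [ihu, ihv]
  | caseE T e alts ihe ihalts =>
      simp only [rename, subst]; rw [ihe]; congr 1; funext c; rw [ihalts, rename_liftN_upN]
  | letrecE n b t ihb iht =>
      simp only [rename, subst]; rw [iht, rename_liftN_upN]; congr 1; funext i
      rw [ihb, rename_liftN_upN]

theorem subst_upN_upN (m : ℕ) (σ τ : ℕ → Exp S) :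
    (fun k => subst (upN m σ) (upN m τ k)) = upN m (fun k => subst σ (τ k)) := by
  funext k
  by_cases h : k < m
  · simp [upN, subst, h]
  · simp only [upN, h, ite_false]
    rw [subst_rename, rename_subst]
    congr 1
    funext j
    have h2 : ¬ (j + m < m) := by omega
    simp [upN, h2]

theorem subst_subst (σ τ : ℕ → Exp S) (e : Exp S) :
    subst σ (subst τ e) = subst (fun k => subst σ (τ k)) e := by
  induction e generalizing σ τ with
  | var k => rfl
  | app u v ihu ihv => simp only [subst]; rw [ihu, ihv]
  | lam u ih => simp only [subst]; rw [ih, subst_upN_upN]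
  | constr T c args ih => simp only [subst]; congr 1; funext i; rw [ih]
  | seqE u v ihu ihv => simp only [subst]; rw [ihu, ihv]
  | caseE T e alts ihe ihalts =>
      simp only [subst]; rw [ihe]; congr 1; funext c; rw [ihalts, subst_upN_upN]
  | letrecE n b t ihb iht =>
      simp only [subst]; rw [iht, subst_upN_upN]; congr 1; funext i; rw [ihb, subst_upN_upN]

theorem upN_var (m : ℕ) : upN m (fun k => (.var k : Exp S)) = fun k => .var k := by
  funext k
  by_cases h : k < m
  · simp [upN, h]
  · simp only [upN, h, ite_false, rename]
    congr 1
    omega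

theorem subst_var (e : Exp S) : subst (fun k => .var k) e = e := by
  induction e with
  | var k => rfl
  | app u v ihu ihv => simp only [subst]; rw [ihu, ihv]
  | lam u ih => simp only [subst]; rw [upN_var, ih]
  | constr T c args ih => simp only [subst]; congr 1; funext i; rw [ih]
  | seqE u v ihu ihv => simp only [subst]; rw [ihu, ihv]
  | caseE T e alts ihe ihalts =>
      simp only [subst]; rw [ihe]; congr 1; funext c; rw [upN_var, ihalts]
  | letrecE n b t ihb iht =>
      simp only [subst]; rw [upN_var, iht]; congr 1; funext i; rw [ihb]

theorem subst_consSub (σ : ℕ → Exp S) (a u : Exp S) :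
    subst σ (subst (consSub a) u) = subst (consSub (subst σ a)) (subst (upN 1 σ) u) := by
  rw [subst_subst, subst_subst]
  congr 1
  funext k
  cases k with
  | zero => simp [consSub, upN, subst]
  | succ k =>
      have h : ¬ (k + 1 < 1) := by omega
      simp only [consSub, subst, upN, h, ite_false, subst_rename]
      exact (subst_var _).symm

theorem subst_instSub (σ : ℕ → Exp S) {m : ℕ} (args : Fin m → Exp S) (u : Exp S) :
    subst σ (subst (instSub args) u)
      = subst (instSub (fun i => subst σ (args i))) (subst (upN m σ) u) := by
  rw [subst_subst, subst_subst]
  congr 1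
  funext k
  by_cases h : k < m
  · simp [instSub, upN, subst, h]
  · have hshift : (fun j => instSub (fun i => subst σ (args i)) (j + m)) = fun j => .var j := by
      funext j
      have h2 : ¬ (j + m < m) := by omega
      simp [instSub, h2]
    simp only [instSub, upN, h, dite_false, ite_false]
    rw [subst_rename, hshift, subst_var]
    rfl

theorem rename_consSub (f : ℕ → ℕ) (a u : Exp S) :
    rename f (subst (consSub a) u) = subst (consSub (rename f a)) (rename (liftN 1 f) u) := by
  rw [rename_subst, subst_rename]
  congr 1
  funext k
  cases k with
  | zero => simp [consSub, liftN]
  | succ k =>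
      have h : ¬ (k + 1 < 1) := by omega
      simp [consSub, liftN, h, rename]

theorem rename_instSub (f : ℕ → ℕ) {m : ℕ} (args : Fin m → Exp S) (u : Exp S) :
    rename f (subst (instSub args) u)
      = subst (instSub (fun i => rename f (args i))) (rename (liftN m f) u) := by
  rw [rename_subst, subst_rename]
  congr 1
  funext k
  by_cases h : k < m
  · simp [instSub, liftN, h]
  · have h2 : ¬ (f (k - m) + m < m) := by omega
    simp [instSub, liftN, h, h2, rename]

theorem isValue.rename {v : Exp S} (h : isValue v) (f : ℕ → ℕ) : isValue (rename f v) := by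
  cases v <;> simp_all [isValue, Core.rename]

theorem isValue.subst {v : Exp S} (h : isValue v) (σ : ℕ → Exp S) : isValue (subst σ v) := by
  cases v <;> simp_all [isValue, Core.subst]

end Substitution

section ParallelReduction

inductive Par : Exp S → Exp S → Prop where
  | var (k) : Par (.var k) (.var k)
  | app {u u' v v'} : Par u u' → Par v v' → Par (.app u v) (.app u' v')
  | lam {u u'} : Par u u' → Par (.lam u) (.lam u')
  | constr {T c args args'} : (∀ i, Par (args i) (args' i)) →
      Par (.constr T c args) (.constr T c args')
  | seqC {u u' v v'} : Par u u' → Par v v' → Par (.seqE u v) (.seqE u' v')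
  | caseC {T e e' alts alts'} : Par e e' → (∀ c, Par (alts c) (alts' c)) →
      Par (.caseE T e alts) (.caseE T e' alts')
  | letrec {n b b' t t'} : (∀ i : Fin (n+1), Par (b i) (b' i)) → Par t t' →
      Par (.letrecE n b t) (.letrecE n b' t')
  | beta {u u' a a'} : Par u u' → Par a a' →
      Par (.app (.lam u) a) (subst (consSub a') u')
  | seqR {v q q'} : isValue v → Par q q' → Par (.seqE v q) q'
  | caseR {T c args args' alts r'} : (∀ i, Par (args i) (args' i)) → Par (alts c) r' →
      Par (.caseE T (.constr T c args) alts) (subst (instSub args') r')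

theorem Par.refl (e : Exp S) : Par e e := by
  induction e with
  | var k => exact .var k
  | app u v ihu ihv => exact .app ihu ihv
  | lam u ih => exact .lam ih
  | constr T c args ih => exact .constr ih
  | seqE u v ihu ihv => exact .seqC ihu ihv
  | caseE T e alts ihe ihalts => exact .caseC ihe ihalts
  | letrecE n b t ihb iht => exact .letrec ihb iht

theorem Par.isValue {u u' : Exp S} (h : Par u u') (hv : isValue u) : isValue u' := by
  cases h <;> simp_all [Core.isValue]

theorem Par.lam_left {b t : Exp S} (h : Par (.lam b) t) : ∃ b', t = .lam b' ∧ Par b b' := by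
  cases h with
  | lam hb => exact ⟨_, rfl, hb⟩

theorem Par.constr_left {T : S.TyName} {c : S.CName T} {args : Fin (S.arity T c) → Exp S}
    {t : Exp S} (h : Par (.constr T c args) t) :
    ∃ args', t = .constr T c args' ∧ ∀ i, Par (args i) (args' i) := by
  cases h with
  | constr hargs => exact ⟨_, rfl, hargs⟩

theorem Par.rename {u u' : Exp S} (h : Par u u') (f : ℕ → ℕ) :
    Par (rename f u) (rename f u') := by
  induction h generalizing f with
  | var k => exact .var _
  | app _ _ ihu ihv => exact .app (ihu f) (ihv f)
  | lam _ ih => exact .lam (ih _)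
  | constr _ ih => exact .constr fun i => ih i f
  | seqC _ _ ihu ihv => exact .seqC (ihu f) (ihv f)
  | caseC _ _ ihe ihalts => exact .caseC (ihe f) fun c => ihalts c _
  | letrec _ _ ihb iht => exact .letrec (fun i => ihb i _) (iht _)
  | beta _ _ ihu iha => rw [rename_consSub]; exact .beta (ihu _) (iha f)
  | seqR hv _ ihq => exact .seqR (hv.rename f) (ihq f)
  | caseR _ _ ihargs ihr => rw [rename_instSub]; exact .caseR (fun i => ihargs i f) (ihr _)

theorem Par.upN {σ σ' : ℕ → Exp S} (H : ∀ k, Par (σ k) (σ' k)) (m k : ℕ) :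
    Par (upN m σ k) (upN m σ' k) := by
  by_cases h : k < m
  · simp only [Core.upN, h, if_pos]; exact .var k
  · simp only [Core.upN, h, ite_false]; exact (H _).rename _

theorem Par.consSub {a a' : Exp S} (h : Par a a') (k : ℕ) : Par (consSub a k) (consSub a' k) := by
  cases k with
  | zero => exact h
  | succ k => exact .var k

theorem Par.instSub {m : ℕ} {args args' : Fin m → Exp S} (h : ∀ i, Par (args i) (args' i))
    (k : ℕ) : Par (instSub args k) (instSub args' k) := by
  by_cases hk : k < m
  · simp only [Core.instSub, hk, dif_pos]; exact h _
  · simp only [Core.instSub, hk, dite_false]; exact .var _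

theorem Par.subst {u u' : Exp S} (h : Par u u') {σ σ' : ℕ → Exp S}
    (H : ∀ k, Par (σ k) (σ' k)) : Par (subst σ u) (subst σ' u') := by
  induction h generalizing σ σ' with
  | var k => exact H k
  | app _ _ ihu ihv => exact .app (ihu H) (ihv H)
  | lam _ ih => exact .lam (ih (Par.upN H 1))
  | constr _ ih => exact .constr fun i => ih i H
  | seqC _ _ ihu ihv => exact .seqC (ihu H) (ihv H)
  | caseC _ _ ihe ihalts => exact .caseC (ihe H) fun c => ihalts c (Par.upN H _)
  | letrec _ _ ihb iht => exact .letrec (fun i => ihb i (Par.upN H _)) (iht (Par.upN H _))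
  | beta _ _ ihu iha => rw [subst_consSub]; exact .beta (ihu (Par.upN H 1)) (iha H)
  | seqR hv _ ihq => exact .seqR (hv.subst _) (ihq H)
  | caseR _ _ ihargs ihr =>
      rw [subst_instSub]; exact .caseR (fun i => ihargs i H) (ihr (Par.upN H _))

theorem Par.plugA {r r' : Exp S} (h : Par r r') (A : ACtx S) : Par (plugA A r) (plugA A r') := by
  induction A with
  | hole => exact h
  | appA A t ih => exact .app ih (.refl t)
  | seqA A t ih => exact .seqC ih (.refl t)
  | caseA T A alts ih => exact .caseC ih fun c => .refl _

theorem Par.plugC {r r' : Exp S} (h : Par r r') (C : Ctx S) : Par (plugC C r) (plugC C r') := by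
  induction C with
  | hole => exact h
  | appL C t ih => exact .app ih (.refl t)
  | appR t C ih => exact .app (.refl t) ih
  | lamC C ih => exact .lam ih
  | seqL C t ih => exact .seqC ih (.refl t)
  | seqR t C ih => exact .seqC (.refl t) ih
  | constrC T c i args C ih =>
      refine .constr fun j => ?_
      rcases eq_or_ne j i with rfl | hj
      · simpa using ih
      · simpa [Function.update_of_ne hj] using .refl _
  | caseScrut T C alts ih => exact .caseC ih fun c => .refl _
  | caseAlt T c0 scrut alts C ih =>
      refine .caseC (.refl scrut) fun c => ?_
      unfold updAlt
      split_ifs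
      exacts [ih, .refl _]
  | letrecB n i b C t ih =>
      refine .letrec (fun j => ?_) (.refl t)
      rcases eq_or_ne j i with rfl | hj
      · simpa using ih
      · simpa [Function.update_of_ne hj] using .refl _
  | letrecT n b C ih => exact .letrec (fun i => .refl _) ih

theorem Par.of_lccBase {r r' : Exp S} (h : LccBase r r') : Par r r' := by
  cases h with
  | nbeta => exact .beta (.refl _) (.refl _)
  | nseq hv => exact .seqR hv (.refl _)
  | ncase => exact .caseR (fun i => .refl _) (.refl _)

end ParallelReduction

section NormalOrder

theorem LccBase.subst {r r' : Exp S} (h : LccBase r r') (σ : ℕ → Exp S) :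
    LccBase (subst σ r) (subst σ r') := by
  cases h with
  | nbeta => simp only [Core.subst]; rw [subst_consSub]; exact .nbeta
  | nseq hv => exact .nseq (hv.subst σ)
  | ncase => simp only [Core.subst]; rw [subst_instSub]; exact .ncase

theorem lccStep.of_lccBase {r r' : Exp S} (h : LccBase r r') : lccStep r r' :=
  ⟨.hole, r, r', h, rfl, rfl⟩

theorem lccStep.app {u u₁ : Exp S} (h : lccStep u u₁) (v : Exp S) :
    lccStep (.app u v) (.app u₁ v) := by
  obtain ⟨A, r, r', hb, rfl, rfl⟩ := h
  exact ⟨.appA A v, r, r', hb, rfl, rfl⟩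

theorem lccStep.seqE {u u₁ : Exp S} (h : lccStep u u₁) (v : Exp S) :
    lccStep (.seqE u v) (.seqE u₁ v) := by
  obtain ⟨A, r, r', hb, rfl, rfl⟩ := h
  exact ⟨.seqA A v, r, r', hb, rfl, rfl⟩

theorem lccStep.caseE {e e₁ : Exp S} (h : lccStep e e₁) (T : S.TyName)
    (alts : (c : S.CName T) → Exp S) : lccStep (.caseE T e alts) (.caseE T e₁ alts) := by
  obtain ⟨A, r, r', hb, rfl, rfl⟩ := h
  exact ⟨.caseA T A alts, r, r', hb, rfl, rfl⟩

theorem lccStep.subst {u u₁ : Exp S} (h : lccStep u u₁) (σ : ℕ → Exp S) :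
    lccStep (subst σ u) (subst σ u₁) := by
  obtain ⟨A, r, r', hb, rfl, rfl⟩ := h
  induction A with
  | hole => exact .of_lccBase (hb.subst σ)
  | appA A t ih => exact ih.app _
  | seqA A t ih => exact ih.seqE _
  | caseA T A alts ih => exact ih.caseE T _

theorem lccSteps_app {u u₁ : Exp S} (h : u ⟶* u₁) (v : Exp S) : .app u v ⟶* .app u₁ v :=
  h.lift (fun x => Exp.app x v) fun _ _ hs => hs.app v

theorem lccSteps_seqE {u u₁ : Exp S} (h : u ⟶* u₁) (v : Exp S) : .seqE u v ⟶* .seqE u₁ v :=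
  h.lift (fun x => Exp.seqE x v) fun _ _ hs => hs.seqE v

theorem lccSteps_caseE {e e₁ : Exp S} (h : e ⟶* e₁) (T : S.TyName)
    (alts : (c : S.CName T) → Exp S) : .caseE T e alts ⟶* .caseE T e₁ alts :=
  h.lift (fun x => Exp.caseE T x alts) fun _ _ hs => hs.caseE T alts

theorem lccSteps_subst {u u₁ : Exp S} (h : u ⟶* u₁) (σ : ℕ → Exp S) :
    subst σ u ⟶* subst σ u₁ :=
  h.lift (subst σ) fun _ _ hs => hs.subst σ

theorem not_lccStep_of_isValue {v z : Exp S} (hv : isValue v) : ¬ lccStep v z := by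
  rintro ⟨A, r, r', hb, rfl, -⟩
  cases A with
  | hole => cases hb <;> simp [plugA, isValue] at hv
  | _ => simp [plugA, isValue] at hv

theorem not_lccStep_var {k : ℕ} {z : Exp S} : ¬ lccStep (.var k) z := by
  rintro ⟨A, r, r', hb, he, -⟩
  cases A with
  | hole => subst he; cases hb
  | _ => simp [plugA] at he

theorem not_lccStep_letrecE {n : ℕ} {b : Fin (n+1) → Exp S} {t z : Exp S} :
    ¬ lccStep (.letrecE n b t) z := by
  rintro ⟨A, r, r', hb, he, -⟩
  cases A with
  | hole => subst he; cases hb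
  | _ => simp [plugA] at he

theorem lccStep_app_inv {u v z : Exp S} (h : lccStep (.app u v) z) :
    (∃ b, u = .lam b ∧ z = subst (consSub v) b) ∨ (∃ u₁, lccStep u u₁ ∧ z = .app u₁ v) := by
  obtain ⟨A, r, r', hb, he, rfl⟩ := h
  cases A with
  | hole =>
      subst he
      cases hb with
      | nbeta => exact .inl ⟨_, rfl, rfl⟩
  | appA A t =>
      obtain ⟨rfl, rfl⟩ := Exp.app.inj he
      exact .inr ⟨_, ⟨A, r, r', hb, rfl, rfl⟩, rfl⟩
  | _ => simp [plugA] at he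

theorem lccStep_seqE_inv {u v z : Exp S} (h : lccStep (.seqE u v) z) :
    (isValue u ∧ z = v) ∨ (∃ u₁, lccStep u u₁ ∧ z = .seqE u₁ v) := by
  obtain ⟨A, r, r', hb, he, rfl⟩ := h
  cases A with
  | hole =>
      subst he
      cases hb with
      | nseq hv => exact .inl ⟨hv, rfl⟩
  | seqA A t =>
      obtain ⟨rfl, rfl⟩ := Exp.seqE.inj he
      exact .inr ⟨_, ⟨A, r, r', hb, rfl, rfl⟩, rfl⟩
  | _ => simp [plugA] at he

theorem lccStep_caseE_inv {T : S.TyName} {e z : Exp S} {alts : (c : S.CName T) → Exp S}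
    (h : lccStep (.caseE T e alts) z) :
    (∃ c args, e = .constr T c args ∧ z = subst (instSub args) (alts c)) ∨
      (∃ e₁, lccStep e e₁ ∧ z = .caseE T e₁ alts) := by
  obtain ⟨A, r, r', hb, he, rfl⟩ := h
  cases A with
  | hole =>
      subst he
      cases hb with
      | ncase => exact .inl ⟨_, _, rfl, rfl⟩
  | caseA T' A alts' =>
      obtain ⟨rfl, rfl, h3⟩ := Exp.caseE.inj he
      cases eq_of_heq h3
      exact .inr ⟨_, ⟨A, r, r', hb, rfl, rfl⟩, rfl⟩
  | _ => simp [plugA] at he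

theorem Par.of_lccStep {s s' : Exp S} (h : lccStep s s') : Par s s' := by
  obtain ⟨A, r, r', hb, rfl, rfl⟩ := h
  exact (Par.of_lccBase hb).plugA A

end NormalOrder

section Standardization

inductive IPar : Exp S → Exp S → Prop where
  | var (k) : IPar (.var k) (.var k)
  | app {u u' v v'} : IPar u u' → Par v v' → IPar (.app u v) (.app u' v')
  | lam {u u'} : Par u u' → IPar (.lam u) (.lam u')
  | constr {T c args args'} : (∀ i, Par (args i) (args' i)) →
      IPar (.constr T c args) (.constr T c args')
  | seqC {u u' v v'} : IPar u u' → Par v v' → IPar (.seqE u v) (.seqE u' v')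
  | caseC {T e e' alts alts'} : IPar e e' → (∀ c, Par (alts c) (alts' c)) →
      IPar (.caseE T e alts) (.caseE T e' alts')
  | letrec {n b b' t t'} : (∀ i : Fin (n+1), Par (b i) (b' i)) → Par t t' →
      IPar (.letrecE n b t) (.letrecE n b' t')

theorem IPar.isValue_left {u u' : Exp S} (h : IPar u u') (hv : isValue u') : isValue u := by
  cases h <;> simp_all [isValue]

theorem IPar.lam_right {p b' : Exp S} (h : IPar p (.lam b')) : ∃ b, p = .lam b ∧ Par b b' := by
  cases h with
  | lam hb => exact ⟨_, rfl, hb⟩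

theorem IPar.constr_right {T : S.TyName} {c : S.CName T} {args' : Fin (S.arity T c) → Exp S}
    {p : Exp S} (h : IPar p (.constr T c args')) :
    ∃ args, p = .constr T c args ∧ ∀ i, Par (args i) (args' i) := by
  cases h with
  | constr hargs => exact ⟨_, rfl, hargs⟩

theorem Par.lccStep_forward {s t s₁ : Exp S} (h : Par s t) (hs : lccStep s s₁) :
    ∃ t₁, t ⟶* t₁ ∧ Par s₁ t₁ := by
  induction h generalizing s₁ with
  | var k => exact absurd hs not_lccStep_var
  | lam _ => exact absurd hs (not_lccStep_of_isValue trivial)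
  | constr _ => exact absurd hs (not_lccStep_of_isValue trivial)
  | letrec _ _ => exact absurd hs not_lccStep_letrecE
  | @app u u' v v' hu hv ihu =>
      rcases lccStep_app_inv hs with ⟨b, rfl, rfl⟩ | ⟨u₁, hu₁, rfl⟩
      · obtain ⟨b', rfl, hbb⟩ := hu.lam_left
        exact ⟨_, .single (.of_lccBase .nbeta), hbb.subst hv.consSub⟩
      · obtain ⟨t₁, ht₁, hp⟩ := ihu hu₁
        exact ⟨_, lccSteps_app ht₁ v', .app hp hv⟩
  | @seqC u u' v v' hu hv ihu =>
      rcases lccStep_seqE_inv hs with ⟨hval, rfl⟩ | ⟨u₁, hu₁, rfl⟩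
      · exact ⟨v', .single (.of_lccBase (.nseq (hu.isValue hval))), hv⟩
      · obtain ⟨t₁, ht₁, hp⟩ := ihu hu₁
        exact ⟨_, lccSteps_seqE ht₁ v', .seqC hp hv⟩
  | @caseC T e e' alts alts' he halts ihe =>
      rcases lccStep_caseE_inv hs with ⟨c, args, rfl, rfl⟩ | ⟨e₁, he₁, rfl⟩
      · obtain ⟨args', rfl, haa⟩ := he.constr_left
        exact ⟨_, .single (.of_lccBase .ncase), (halts c).subst (Par.instSub haa)⟩
      · obtain ⟨t₁, ht₁, hp⟩ := ihe he₁
        exact ⟨_, lccSteps_caseE ht₁ T alts', .caseC hp halts⟩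
  | beta hu ha =>
      rcases lccStep_app_inv hs with ⟨b, hb, rfl⟩ | ⟨u₁, hu₁, -⟩
      · cases hb
        exact ⟨_, .refl, hu.subst ha.consSub⟩
      · exact absurd hu₁ (not_lccStep_of_isValue trivial)
  | seqR hval hq =>
      rcases lccStep_seqE_inv hs with ⟨-, rfl⟩ | ⟨u₁, hu₁, -⟩
      · exact ⟨_, .refl, hq⟩
      · exact absurd hu₁ (not_lccStep_of_isValue hval)
  | caseR hargs hr =>
      rcases lccStep_caseE_inv hs with ⟨c, args, hc, rfl⟩ | ⟨e₁, he₁, -⟩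
      · cases hc
        exact ⟨_, .refl, hr.subst (Par.instSub hargs)⟩
      · exact absurd he₁ (not_lccStep_of_isValue trivial)

theorem IPar.lccStep_swap {m t t₁ : Exp S} (h : IPar m t) (ht : lccStep t t₁) :
    ∃ m₁, lccStep m m₁ ∧ Par m₁ t₁ := by
  induction h generalizing t₁ with
  | var k => exact absurd ht not_lccStep_var
  | lam _ => exact absurd ht (not_lccStep_of_isValue trivial)
  | constr _ => exact absurd ht (not_lccStep_of_isValue trivial)
  | letrec _ _ => exact absurd ht not_lccStep_letrecE
  | @app u u' v v' hu hv ih =>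
      rcases lccStep_app_inv ht with ⟨b', rfl, rfl⟩ | ⟨u₁', hu₁', rfl⟩
      · obtain ⟨b, rfl, hbb⟩ := hu.lam_right
        exact ⟨_, .of_lccBase .nbeta, hbb.subst hv.consSub⟩
      · obtain ⟨m₁, hm₁, hp⟩ := ih hu₁'
        exact ⟨_, hm₁.app v, .app hp hv⟩
  | @seqC u u' v v' hu hv ih =>
      rcases lccStep_seqE_inv ht with ⟨hval, rfl⟩ | ⟨u₁', hu₁', rfl⟩
      · exact ⟨v, .of_lccBase (.nseq (hu.isValue_left hval)), hv⟩
      · obtain ⟨m₁, hm₁, hp⟩ := ih hu₁'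
        exact ⟨_, hm₁.seqE v, .seqC hp hv⟩
  | @caseC T e e' alts alts' he halts ih =>
      rcases lccStep_caseE_inv ht with ⟨c, args', rfl, rfl⟩ | ⟨e₁', he₁', rfl⟩
      · obtain ⟨args, rfl, haa⟩ := he.constr_right
        exact ⟨_, .of_lccBase .ncase, (halts c).subst (Par.instSub haa)⟩
      · obtain ⟨m₁, hm₁, hp⟩ := ih he₁'
        exact ⟨_, hm₁.caseE T alts, .caseC hp halts⟩

def StdPar (s t : Exp S) : Prop := ∃ m, s ⟶* m ∧ IPar m t

theorem StdPar.consSub {a a' : Exp S} (h : StdPar a a') (k : ℕ) :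
    StdPar (consSub a k) (consSub a' k) := by
  cases k with
  | zero => exact h
  | succ k => exact ⟨_, .refl, .var k⟩

theorem StdPar.instSub {m : ℕ} {args args' : Fin m → Exp S}
    (h : ∀ i, StdPar (args i) (args' i)) (k : ℕ) :
    StdPar (instSub args k) (instSub args' k) := by
  by_cases hk : k < m
  · simp only [Core.instSub, hk, dite_true]; exact h _
  · simp only [Core.instSub, hk, dite_false]; exact ⟨_, .refl, .var _⟩

theorem IPar.subst_stdPar {u u' : Exp S} (h : IPar u u') {σ σ' : ℕ → Exp S}
    (hpar : ∀ k, Par (σ k) (σ' k)) (hstd : ∀ k, StdPar (σ k) (σ' k)) :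
    StdPar (subst σ u) (subst σ' u') := by
  induction h with
  | var k => exact hstd k
  | app _ hq ih =>
      obtain ⟨P, hP, hiP⟩ := ih
      exact ⟨_, lccSteps_app hP _, .app hiP (hq.subst hpar)⟩
  | lam hb => exact ⟨_, .refl, .lam (hb.subst (Par.upN hpar 1))⟩
  | constr hargs => exact ⟨_, .refl, .constr fun i => (hargs i).subst hpar⟩
  | seqC _ hq ih =>
      obtain ⟨P, hP, hiP⟩ := ih
      exact ⟨_, lccSteps_seqE hP _, .seqC hiP (hq.subst hpar)⟩
  | @caseC T _ _ _ _ _ halts ih =>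
      obtain ⟨P, hP, hiP⟩ := ih
      exact ⟨_, lccSteps_caseE hP T _, .caseC hiP fun c => (halts c).subst (Par.upN hpar _)⟩
  | letrec hb ht =>
      exact ⟨_, .refl, .letrec (fun i => (hb i).subst (Par.upN hpar _))
        (ht.subst (Par.upN hpar _))⟩

theorem Par.stdPar {s t : Exp S} (h : Par s t) : StdPar s t := by
  induction h with
  | var k => exact ⟨_, .refl, .var k⟩
  | app _ hv ihu =>
      obtain ⟨m, hm, him⟩ := ihu
      exact ⟨_, lccSteps_app hm _, .app him hv⟩
  | lam hb => exact ⟨_, .refl, .lam hb⟩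
  | constr hargs => exact ⟨_, .refl, .constr hargs⟩
  | seqC _ hv ihu =>
      obtain ⟨m, hm, him⟩ := ihu
      exact ⟨_, lccSteps_seqE hm _, .seqC him hv⟩
  | @caseC T _ _ _ _ _ halts ihe =>
      obtain ⟨m, hm, him⟩ := ihe
      exact ⟨_, lccSteps_caseE hm T _, .caseC him halts⟩
  | letrec hb ht => exact ⟨_, .refl, .letrec hb ht⟩
  | beta _ ha ihu iha =>
      obtain ⟨u₀, hu₀, hiu₀⟩ := ihu
      obtain ⟨m, hm, him⟩ := hiu₀.subst_stdPar ha.consSub iha.consSub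
      exact ⟨m, .head (.of_lccBase .nbeta) ((lccSteps_subst hu₀ _).trans hm), him⟩
  | seqR hval _ ihq =>
      obtain ⟨m, hm, him⟩ := ihq
      exact ⟨m, .head (.of_lccBase (.nseq hval)) hm, him⟩
  | caseR hargs _ ihargs ihr =>
      obtain ⟨m₀, hm₀, him₀⟩ := ihr
      obtain ⟨m, hm, him⟩ := him₀.subst_stdPar (Par.instSub hargs) (StdPar.instSub ihargs)
      exact ⟨m, .head (.of_lccBase .ncase) ((lccSteps_subst hm₀ _).trans hm), him⟩

end Standardization

theorem lccConv_of_lccSteps {s m : Exp S} (h : s ⟶* m) (hm : lccConv m) : lccConv s :=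
  let ⟨v, hmv, hv⟩ := hm
  ⟨v, h.trans hmv, hv⟩

theorem Par.lccConv_right {s t : Exp S} (h : Par s t) (hs : lccConv s) : lccConv t := by
  obtain ⟨v, hsv, hv⟩ := hs
  induction hsv using Relation.ReflTransGen.head_induction_on generalizing t with
  | refl => exact ⟨t, .refl, h.isValue hv⟩
  | head hstep _ ih =>
      obtain ⟨t₁, ht₁, h₁⟩ := h.lccStep_forward hstep
      exact lccConv_of_lccSteps ht₁ (ih h₁)

theorem IPar.lccConv_left {m t : Exp S} (h : IPar m t) (ht : lccConv t) : lccConv m := by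
  obtain ⟨v, htv, hv⟩ := ht
  induction htv using Relation.ReflTransGen.head_induction_on generalizing m with
  | refl => exact ⟨m, .refl, h.isValue_left hv⟩
  | head hstep _ ih =>
      obtain ⟨m₁, hm₁, hp⟩ := h.lccStep_swap hstep
      obtain ⟨m₂, hm₂, him₂⟩ := hp.stdPar
      exact lccConv_of_lccSteps (.head hm₁ hm₂) (ih him₂)

theorem Par.lccConv_iff {s t : Exp S} (h : Par s t) : lccConv s ↔ lccConv t := by
  refine ⟨h.lccConv_right, fun ht => ?_⟩
  obtain ⟨m, hsm, hmt⟩ := h.stdPar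
  exact lccConv_of_lccSteps hsm (hmt.lccConv_left ht)

theorem eqLcc_of_par {s t : Exp S} (h : Par s t) : eqLcc s t :=
  ⟨fun C _ => ((h.plugC C).lccConv_iff).mp, fun C _ => ((h.plugC C).lccConv_iff).mpr⟩

/-- In `L_lcc`, normal-order reduction preserves contextual equivalence;
hence the reduction rules (nbeta), (ncase), (nseq) are correct program transformations,
i.e. applying them in any context preserves `∼_lcc`. -/
theorem lcc_reduction_correct (S : Sig) :
    (∀ s s' : Exp S, lfree s → lccStep s s' → eqLcc s s') ∧
    (∀ r r' : Exp S, lfree r → LccBase r r' →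
      ∀ C : Ctx S, lfreeCtx C → eqLcc (plugC C r) (plugC C r')) :=
  ⟨fun _ _ _ hstep => eqLcc_of_par (.of_lccStep hstep),
    fun _ _ _ hb C _ => eqLcc_of_par ((Par.of_lccBase hb).plugC C)⟩

end Core
end
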